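/- arXiv:math/0701056 — 2 statements merged into one kernel-verified Lean document; each statement's English description precedes it below -/
import Mathlib

section
/- Let T > 0 and let q, Y : ℝ → ℍ be differentiable with ‖q(t)‖ = ‖Y(t)‖ = 1 on [0,T]. Suppose q satisfies q'(t) = (u1(t) e1 + u2(t) e2) · q(t) on [0,T] for real-valued functions u1, u2, and suppose there is a differentiable function φ : ℝ → ℝ with q(t) = exp(φ(t) e1) · Y(t) on [0,T]. Let ω1, ω2, ω3 : ℝ → ℝ satisfy Y'(t)·Y(t)* = ω1(t) e1 + ω2(t) e2 + ω3(t) e3 and ω2(t)² + ω3(t)² > 0 on [0,T]. Then for all t ∈ [0,T], as an identity of complex numbers, exp(4 i φ(t)) · (ω2(t)² + ω3(t)²) = (ω2(t) − i ω3(t))². -/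
open Quaternion Set

/-- The imaginary quaternion unit `i`. -/
noncomputable def e1 : ℍ[ℝ] := ⟨0, 1, 0, 0⟩
/-- The imaginary quaternion unit `j`. -/
noncomputable def e2 : ℍ[ℝ] := ⟨0, 0, 1, 0⟩
/-- The imaginary quaternion unit `k`. -/
noncomputable def e3 : ℍ[ℝ] := ⟨0, 0, 0, 1⟩

/-- `qexp φ = exp (φ e1) = cos φ + (sin φ) e1`. -/
noncomputable def qexp (φ : ℝ) : ℍ[ℝ] :=
  (Real.cos φ : ℍ[ℝ]) + (Real.sin φ : ℍ[ℝ]) * e1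

/-!
Put `E = exp(φ e1)` and `U = u1 e1 + u2 e2`. Differentiating `q = E Y` and using `q' = U q` and
`E' = φ' e1 E` gives `Y' Y* = E* (U - φ' e1) E`. Conjugation by `E*` fixes `e1` and rotates the
`e2 e3`-plane by the angle `-2φ`, so `ω2 + i ω3 = u2 e^{-2iφ}`. Hence `ω2 - i ω3 = u2 e^{2iφ}` and
`ω2² + ω3² = u2²`, and squaring the former gives the identity.
-/

@[simp] theorem e1_re : e1.re = 0 := rfl
@[simp] theorem e1_imI : e1.imI = 1 := rfl
@[simp] theorem e1_imJ : e1.imJ = 0 := rfl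
@[simp] theorem e1_imK : e1.imK = 0 := rfl
@[simp] theorem e2_re : e2.re = 0 := rfl
@[simp] theorem e2_imI : e2.imI = 0 := rfl
@[simp] theorem e2_imJ : e2.imJ = 1 := rfl
@[simp] theorem e2_imK : e2.imK = 0 := rfl
@[simp] theorem e3_re : e3.re = 0 := rfl
@[simp] theorem e3_imI : e3.imI = 0 := rfl
@[simp] theorem e3_imJ : e3.imJ = 0 := rfl
@[simp] theorem e3_imK : e3.imK = 1 := rfl

theorem e1_mul_e1 : e1 * e1 = -1 := by
  ext <;> simp

theorem qexp_eq_smul (x : ℝ) : qexp x = Real.cos x • (1 : ℍ[ℝ]) + Real.sin x • e1 := by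
  simp [qexp, Algebra.smul_def]

theorem e1_mul_qexp (x : ℝ) : e1 * qexp x = -Real.sin x • (1 : ℍ[ℝ]) + Real.cos x • e1 := by
  rw [qexp_eq_smul, mul_add, mul_smul_comm, mul_smul_comm, e1_mul_e1, mul_one, smul_neg,
    ← neg_smul, add_comm]

theorem hasDerivAt_qexp (x : ℝ) : HasDerivAt qexp (e1 * qexp x) x := by
  rw [e1_mul_qexp, show qexp = _ from funext qexp_eq_smul]
  exact ((Real.hasDerivAt_cos x).smul_const 1).add ((Real.hasDerivAt_sin x).smul_const e1)

theorem star_qexp_mul_qexp (φ : ℝ) : star (qexp φ) * qexp φ = 1 := by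
  ext <;> simp only [qexp, Quaternion.coe_mul_eq_smul] <;>
    simp [Quaternion.re_mul, Quaternion.imI_mul, Quaternion.imJ_mul, Quaternion.imK_mul] <;>
    linarith [Real.sin_sq_add_cos_sq φ]

theorem star_qexp_mul_mul_qexp (φ a b : ℝ) :
    star (qexp φ) * ((a : ℍ[ℝ]) * e1 + (b : ℍ[ℝ]) * e2) * qexp φ =
      (a : ℍ[ℝ]) * e1 + ((b * Real.cos (2 * φ) : ℝ) : ℍ[ℝ]) * e2
        + ((-(b * Real.sin (2 * φ)) : ℝ) : ℍ[ℝ]) * e3 := by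
  have h := Real.sin_sq_add_cos_sq φ
  have ha : a * Real.sin φ ^ 2 + a * Real.cos φ ^ 2 = a := by rw [← mul_add, h, mul_one]
  have hb : b * Real.sin φ ^ 2 + b * Real.cos φ ^ 2 = b := by rw [← mul_add, h, mul_one]
  rw [Real.cos_two_mul, Real.sin_two_mul]
  ext <;> simp only [qexp, Quaternion.coe_mul_eq_smul] <;>
    simp [Quaternion.re_mul, Quaternion.imI_mul, Quaternion.imJ_mul, Quaternion.imK_mul] <;>
    linarith

theorem Quaternion.mul_star_eq_one_of_norm_eq_one {a : ℍ[ℝ]} (ha : ‖a‖ = 1) : a * star a = 1 := by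
  rw [Quaternion.self_mul_star, Quaternion.normSq_eq_norm_mul_self, ha, mul_one, coe_one]

theorem coe_mul_e1_add_coe_mul_e2_add_coe_mul_e3_inj {a₁ a₂ a₃ b₁ b₂ b₃ : ℝ}
    (h : (a₁ : ℍ[ℝ]) * e1 + (a₂ : ℍ[ℝ]) * e2 + (a₃ : ℍ[ℝ]) * e3 =
      (b₁ : ℍ[ℝ]) * e1 + (b₂ : ℍ[ℝ]) * e2 + (b₃ : ℍ[ℝ]) * e3) :
    a₁ = b₁ ∧ a₂ = b₂ ∧ a₃ = b₃ := by
  obtain ⟨-, h₁, h₂, h₃⟩ := QuaternionAlgebra.ext_iff.mp h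
  simp only [Quaternion.coe_mul_eq_smul, imI_add, imJ_add, imK_add, imI_smul, imJ_smul, imK_smul,
    smul_eq_mul, e1_imI, e1_imJ, e1_imK, e2_imI, e2_imJ, e2_imK, e3_imI, e3_imJ, e3_imK,
    mul_zero, mul_one, add_zero, zero_add] at h₁ h₂ h₃
  exact ⟨h₁, h₂, h₃⟩

theorem HasDerivAt.eq_of_eqOn_Icc {E : Type*} [NormedAddCommGroup E] [NormedSpace ℝ E]
    {f g : ℝ → E} {f' g' : E} {a b t : ℝ} (hab : a < b) (ht : t ∈ Icc a b)
    (hfg : EqOn f g (Icc a b)) (hf : HasDerivAt f f' t) (hg : HasDerivAt g g' t) : f' = g' :=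
  (uniqueDiffOn_Icc hab t ht).eq_deriv _ hf.hasDerivWithinAt
    (hg.hasDerivWithinAt.congr hfg (hfg ht))

theorem mul_eq_conj_sub_of_leibniz {R : Type*} [Ring R] {E F Y Z E' Y' U A : R}
    (hE : F * E = 1) (hY : Y * Z = 1) (hE' : E' = A * E) (h : E' * Y + E * Y' = U * (E * Y)) :
    Y' * Z = F * (U - A) * E := by
  have hEY' : E * Y' = (U - A) * E * Y :=
    calc E * Y' = U * (E * Y) - E' * Y := eq_sub_of_add_eq' h
      _ = (U - A) * E * Y := by rw [hE']; noncomm_ring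
  calc Y' * Z = F * (E * Y') * Z := by rw [← mul_assoc F, hE, one_mul]
    _ = F * (U - A) * E := by rw [hEY']; simp only [mul_assoc, hY, mul_one]

theorem exp_four_mul_I_mul_sq_add_sq_eq_sq {θ u ω₂ ω₃ : ℝ}
    (h₂ : ω₂ = u * Real.cos (2 * θ)) (h₃ : ω₃ = -(u * Real.sin (2 * θ))) :
    Complex.exp (4 * Complex.I * θ) * ((ω₂ ^ 2 + ω₃ ^ 2 : ℝ) : ℂ) =
      ((ω₂ : ℂ) - Complex.I * ω₃) ^ 2 := by
  have hnorm : ω₂ ^ 2 + ω₃ ^ 2 = u ^ 2 := by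
    rw [h₂, h₃]; linear_combination u ^ 2 * Real.sin_sq_add_cos_sq (2 * θ)
  have hexp : Complex.exp (4 * Complex.I * θ) =
      (Real.cos (2 * θ) + Real.sin (2 * θ) * Complex.I) ^ 2 := by
    have h4 : 4 * Complex.I * θ = ((2 * θ : ℝ) : ℂ) * Complex.I + ((2 * θ : ℝ) : ℂ) * Complex.I := by
      push_cast; ring
    rw [h4, Complex.exp_add, ← sq, Complex.exp_mul_I, ← Complex.ofReal_cos, ← Complex.ofReal_sin]
  rw [hnorm, hexp, h₂, h₃]
  push_cast
  ring

theorem stmt_1_general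
    (T : ℝ) (hT : 0 < T)
    (q Y : ℝ → ℍ[ℝ]) (q' Y' : ℝ → ℍ[ℝ])
    (hq : ∀ t ∈ Icc (0:ℝ) T, HasDerivAt q (q' t) t)
    (hY : ∀ t ∈ Icc (0:ℝ) T, HasDerivAt Y (Y' t) t)
    (hYnorm : ∀ t ∈ Icc (0:ℝ) T, ‖Y t‖ = 1)
    (u1 u2 : ℝ → ℝ)
    (hode : ∀ t ∈ Icc (0:ℝ) T,
      q' t = (((u1 t : ℝ) : ℍ[ℝ]) * e1 + ((u2 t : ℝ) : ℍ[ℝ]) * e2) * q t)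
    (φ φ' : ℝ → ℝ)
    (hφ : ∀ t ∈ Icc (0:ℝ) T, HasDerivAt φ (φ' t) t)
    (hqY : ∀ t ∈ Icc (0:ℝ) T, q t = qexp (φ t) * Y t)
    (ω1 ω2 ω3 : ℝ → ℝ)
    (hYY : ∀ t ∈ Icc (0:ℝ) T,
      Y' t * star (Y t) =
        ((ω1 t : ℝ) : ℍ[ℝ]) * e1 + ((ω2 t : ℝ) : ℍ[ℝ]) * e2 + ((ω3 t : ℝ) : ℍ[ℝ]) * e3) :
    ∀ t ∈ Icc (0:ℝ) T,
      Complex.exp (4 * Complex.I * (φ t : ℂ)) * ((ω2 t ^ 2 + ω3 t ^ 2 : ℝ) : ℂ) =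
        ((ω2 t : ℂ) - Complex.I * (ω3 t : ℂ)) ^ 2 := by
  intro t ht
  have hderiv : q' t = (φ' t • (e1 * qexp (φ t))) * Y t + qexp (φ t) * Y' t :=
    HasDerivAt.eq_of_eqOn_Icc hT ht hqY (hq t ht)
      (((hasDerivAt_qexp _).scomp t (hφ t ht)).mul (hY t ht))
  have hE' : φ' t • (e1 * qexp (φ t)) = ((φ' t : ℝ) : ℍ[ℝ]) * e1 * qexp (φ t) := by
    rw [Quaternion.coe_mul_eq_smul, smul_mul_assoc]
  have hleibniz : φ' t • (e1 * qexp (φ t)) * Y t + qexp (φ t) * Y' t =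
      (((u1 t : ℝ) : ℍ[ℝ]) * e1 + ((u2 t : ℝ) : ℍ[ℝ]) * e2) * (qexp (φ t) * Y t) := by
    rw [← hderiv, hode t ht, hqY t ht]
  have hframe := mul_eq_conj_sub_of_leibniz (star_qexp_mul_qexp (φ t))
    (Quaternion.mul_star_eq_one_of_norm_eq_one (hYnorm t ht)) hE' hleibniz
  have hU : ((u1 t : ℝ) : ℍ[ℝ]) * e1 + ((u2 t : ℝ) : ℍ[ℝ]) * e2 - ((φ' t : ℝ) : ℍ[ℝ]) * e1 =
      ((u1 t - φ' t : ℝ) : ℍ[ℝ]) * e1 + ((u2 t : ℝ) : ℍ[ℝ]) * e2 := by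
    push_cast; noncomm_ring
  rw [hU, star_qexp_mul_mul_qexp, hYY t ht] at hframe
  obtain ⟨-, h₂, h₃⟩ := coe_mul_e1_add_coe_mul_e2_add_coe_mul_e3_inj hframe
  exact exp_four_mul_I_mul_sq_add_sq_eq_sq h₂ h₃

theorem stmt_1
    (T : ℝ) (hT : 0 < T)
    (q Y : ℝ → ℍ[ℝ]) (q' Y' : ℝ → ℍ[ℝ])
    (hq : ∀ t ∈ Icc (0:ℝ) T, HasDerivAt q (q' t) t)
    (hY : ∀ t ∈ Icc (0:ℝ) T, HasDerivAt Y (Y' t) t)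
    (hqnorm : ∀ t ∈ Icc (0:ℝ) T, ‖q t‖ = 1)
    (hYnorm : ∀ t ∈ Icc (0:ℝ) T, ‖Y t‖ = 1)
    (u1 u2 : ℝ → ℝ)
    (hode : ∀ t ∈ Icc (0:ℝ) T,
      q' t = (((u1 t : ℝ) : ℍ[ℝ]) * e1 + ((u2 t : ℝ) : ℍ[ℝ]) * e2) * q t)
    (φ φ' : ℝ → ℝ)
    (hφ : ∀ t ∈ Icc (0:ℝ) T, HasDerivAt φ (φ' t) t)
    (hqY : ∀ t ∈ Icc (0:ℝ) T, q t = qexp (φ t) * Y t)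
    (ω1 ω2 ω3 : ℝ → ℝ)
    (hYY : ∀ t ∈ Icc (0:ℝ) T,
      Y' t * star (Y t) =
        ((ω1 t : ℝ) : ℍ[ℝ]) * e1 + ((ω2 t : ℝ) : ℍ[ℝ]) * e2 + ((ω3 t : ℝ) : ℍ[ℝ]) * e3)
    (hpos : ∀ t ∈ Icc (0:ℝ) T, 0 < ω2 t ^ 2 + ω3 t ^ 2) :
    ∀ t ∈ Icc (0:ℝ) T,
      Complex.exp (4 * Complex.I * (φ t : ℂ)) * ((ω2 t ^ 2 + ω3 t ^ 2 : ℝ) : ℂ) =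
        ((ω2 t : ℂ) - Complex.I * (ω3 t : ℂ)) ^ 2 :=
  stmt_1_general T hT q Y q' Y' hq hY hYnorm u1 u2 hode φ φ' hφ hqY ω1 ω2 ω3 hYY
end

section
/- Let ᾱ ∈ (0, π] and β̄ ∈ [−π/2, π/2], set λ̄ = −ᾱ/2 if ᾱ ∈ [π/4, 3π/4] and λ̄ = π/4 − ᾱ/2 otherwise, and let α and β be the unique real polynomials of degree ≤ 3 satisfying α(0) = λ̄, α(1) = λ̄ + ᾱ, α'(0) = α'(1) = ᾱ·cos β̄, β(0) = β(1) = β̄, β'(0) = −ᾱ·sin β̄/(sin λ̄·cos λ̄), β'(1) = −ᾱ·sin β̄/(sin(λ̄+ᾱ)·cos(λ̄+ᾱ)). Define the real functions ω2 = α'·cos β − β'·sin α·cos α·sin β and ω3 = α'·sin β + β'·sin α·cos α·cos β. Then ω2(s)² + ω3(s)² > 0 for every s ∈ [0, 1]; i.e., ω2 and ω3 never vanish simultaneously on [0, 1]. -/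
open Set

/-!
`(ω2, ω3)` is `(α', β' sin α cos α)` rotated by the angle `β`, so
`ω2² + ω3² = α'² + (β' sin α cos α)²`. The Hermite data force
`α' s = ᾱ cos β̄ + 6 ᾱ (1 - cos β̄) s (1 - s)`, which is positive on `(0, 1)` since
`cos β̄ ∈ [0, 1]`. At `s = 0, 1` the choice of `λ̄` keeps `λ̄` and `λ̄ + ᾱ` off the multiples of
`π / 2`, so `β' sin α cos α = -ᾱ sin β̄` there and the sum of squares is `ᾱ²`.
-/

namespace Real

theorem sin_mul_cos_ne_zero_of_mem_Ioo {x : ℝ} {k : ℤ}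
    (hx : x ∈ Ioo (k * (π / 2)) ((k + 1) * (π / 2))) : sin x * cos x ≠ 0 := by
  have hsin : sin (2 * x) ≠ 0 := by
    refine sin_ne_zero_iff.2 fun n hn => ?_
    have hk : (k : ℝ) < n := by nlinarith [hx.1, pi_pos]
    have hk' : (n : ℝ) < k + 1 := by nlinarith [hx.2, pi_pos]
    norm_cast at hk hk'
    omega
  rw [sin_two_mul, mul_assoc] at hsin
  exact right_ne_zero_of_mul hsin

theorem sq_add_sq_of_rotation (a b t : ℝ) :
    (a * cos t - b * sin t) ^ 2 + (a * sin t + b * cos t) ^ 2 = a ^ 2 + b ^ 2 := by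
  linear_combination (a ^ 2 + b ^ 2) * sin_sq_add_cos_sq t

end Real

open Real

theorem hasDerivAt_cubic (a b c d s : ℝ) :
    HasDerivAt (fun s : ℝ => a * s ^ 3 + b * s ^ 2 + c * s + d)
      (3 * a * s ^ 2 + 2 * b * s + c) s := by
  have h : HasDerivAt (fun s : ℝ => a * s ^ 3 + b * s ^ 2 + c * s + d)
      (a * (3 * s ^ 2) + b * (2 * s) + c) s := by
    simpa using ((((hasDerivAt_pow 3 s).const_mul a).add
      ((hasDerivAt_pow 2 s).const_mul b)).add ((hasDerivAt_id s).const_mul c)).add_const d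
  exact h.congr_deriv (by ring)

theorem deriv_cubic_eq_of_deriv_zero_eq_deriv_one {f : ℝ → ℝ}
    (hf : ∃ a b c d : ℝ, ∀ s, f s = a * s ^ 3 + b * s ^ 2 + c * s + d) {m : ℝ}
    (h0 : deriv f 0 = m) (h1 : deriv f 1 = m) (s : ℝ) :
    deriv f s = m + 6 * (f 1 - f 0 - m) * s * (1 - s) := by
  obtain ⟨a, b, c, d, hf⟩ := hf
  have hderiv (s : ℝ) : deriv f s = 3 * a * s ^ 2 + 2 * b * s + c := by
    rw [funext hf]
    exact (hasDerivAt_cubic a b c d s).deriv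
  rw [hderiv] at h0 h1 ⊢
  rw [hf, hf]
  linear_combination (1 - 4 * s + 3 * s ^ 2) * h0 + (3 * s ^ 2 - 2 * s) * h1

theorem add_mul_mul_one_sub_pos {m h s : ℝ} (hm : 0 ≤ m) (hmh : m ≤ h) (hh : 0 < h)
    (hs : s ∈ Ioo 0 1) : 0 < m + 6 * (h - m) * s * (1 - s) := by
  obtain ⟨hs0, hs1⟩ := hs
  have hu : 0 < s * (1 - s) := mul_pos hs0 (sub_pos.2 hs1)
  have hu1 : s * (1 - s) ≤ 1 := by nlinarith
  nlinarith [mul_nonneg hm (sub_nonneg.2 hu1), mul_nonneg (sub_nonneg.2 hmh) hu.le]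

theorem sin_mul_cos_lamb_ne_zero {αb lamb : ℝ} (hαb : αb ∈ Ioc 0 π)
    (hlamb : lamb = if αb ∈ Icc (π / 4) (3 * π / 4) then -αb / 2 else π / 4 - αb / 2) :
    sin lamb * cos lamb ≠ 0 ∧ sin (lamb + αb) * cos (lamb + αb) ≠ 0 := by
  obtain ⟨hαb0, hαbπ⟩ := hαb
  split_ifs at hlamb with hmid
  · obtain ⟨hmid1, hmid2⟩ := hmid
    exact ⟨sin_mul_cos_ne_zero_of_mem_Ioo (k := -1) ⟨by push_cast; linarith, by push_cast; linarith⟩,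
      sin_mul_cos_ne_zero_of_mem_Ioo (k := 0) ⟨by push_cast; linarith, by push_cast; linarith⟩⟩
  rcases not_and_or.1 hmid with hsmall | hlarge
  · exact ⟨sin_mul_cos_ne_zero_of_mem_Ioo (k := 0) ⟨by push_cast; linarith, by push_cast; linarith⟩,
      sin_mul_cos_ne_zero_of_mem_Ioo (k := 0) ⟨by push_cast; linarith, by push_cast; linarith⟩⟩
  · exact ⟨sin_mul_cos_ne_zero_of_mem_Ioo (k := -1) ⟨by push_cast; linarith, by push_cast; linarith⟩,
      sin_mul_cos_ne_zero_of_mem_Ioo (k := 1) ⟨by push_cast; linarith, by push_cast; linarith⟩⟩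

theorem stmt_13_general
    (αb βb lamb : ℝ)
    (hαb : αb ∈ Ioc (0:ℝ) Real.pi)
    (hβb : βb ∈ Icc (-(Real.pi/2)) (Real.pi/2))
    (hlamb : lamb = if αb ∈ Icc (Real.pi/4) (3 * Real.pi/4) then -αb/2 else Real.pi/4 - αb/2)
    (α β : ℝ → ℝ)
    (hαpoly : ∃ a b c d : ℝ, ∀ s, α s = a * s ^ 3 + b * s ^ 2 + c * s + d)
    (hα0 : α 0 = lamb) (hα1 : α 1 = lamb + αb)
    (hα'0 : deriv α 0 = αb * Real.cos βb) (hα'1 : deriv α 1 = αb * Real.cos βb)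
    (hβ'0 : deriv β 0 = -(αb * Real.sin βb) / (Real.sin lamb * Real.cos lamb))
    (hβ'1 : deriv β 1 = -(αb * Real.sin βb) / (Real.sin (lamb + αb) * Real.cos (lamb + αb)))
    (ω2 ω3 : ℝ → ℝ)
    (hω2 : ∀ s, ω2 s = deriv α s * Real.cos (β s) -
      deriv β s * Real.sin (α s) * Real.cos (α s) * Real.sin (β s))
    (hω3 : ∀ s, ω3 s = deriv α s * Real.sin (β s) +
      deriv β s * Real.sin (α s) * Real.cos (α s) * Real.cos (β s)) :
    ∀ s ∈ Icc (0:ℝ) 1, 0 < ω2 s ^ 2 + ω3 s ^ 2 := by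
  intro s hs
  rw [hω2, hω3, sq_add_sq_of_rotation]
  have hαb0 : 0 < αb := hαb.1
  have hendpoint {x : ℝ} (hx : sin x * cos x ≠ 0) :
      0 < (αb * cos βb) ^ 2 + (-(αb * sin βb) / (sin x * cos x) * sin x * cos x) ^ 2 := by
    rw [mul_assoc _ (sin x), div_mul_cancel₀ _ hx]
    have hsum : (αb * cos βb) ^ 2 + (-(αb * sin βb)) ^ 2 = αb ^ 2 := by
      linear_combination αb ^ 2 * sin_sq_add_cos_sq βb
    rw [hsum]
    positivity
  obtain ⟨hlamb0, hlamb1⟩ := sin_mul_cos_lamb_ne_zero hαb hlamb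
  rcases eq_endpoints_or_mem_Ioo_of_mem_Icc hs with rfl | rfl | hs
  · rw [hα'0, hβ'0, hα0]
    exact hendpoint hlamb0
  · rw [hα'1, hβ'1, hα1]
    exact hendpoint hlamb1
  · have hα' : 0 < deriv α s := by
      rw [deriv_cubic_eq_of_deriv_zero_eq_deriv_one hαpoly hα'0 hα'1 s, hα0, hα1,
        add_sub_cancel_left]
      have hcos : cos βb ∈ Icc 0 1 := ⟨cos_nonneg_of_mem_Icc hβb, cos_le_one βb⟩
      exact add_mul_mul_one_sub_pos (mul_nonneg hαb0.le hcos.1)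
        (mul_le_of_le_one_right hαb0.le hcos.2) hαb0 hs
    positivity

theorem stmt_13
    (αb βb lamb : ℝ)
    (hαb : αb ∈ Ioc (0:ℝ) Real.pi)
    (hβb : βb ∈ Icc (-(Real.pi/2)) (Real.pi/2))
    (hlamb : lamb = if αb ∈ Icc (Real.pi/4) (3 * Real.pi/4) then -αb/2 else Real.pi/4 - αb/2)
    (α β : ℝ → ℝ)
    (hαpoly : ∃ a b c d : ℝ, ∀ s, α s = a * s ^ 3 + b * s ^ 2 + c * s + d)
    (hβpoly : ∃ a b c d : ℝ, ∀ s, β s = a * s ^ 3 + b * s ^ 2 + c * s + d)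
    (hα0 : α 0 = lamb) (hα1 : α 1 = lamb + αb)
    (hα'0 : deriv α 0 = αb * Real.cos βb) (hα'1 : deriv α 1 = αb * Real.cos βb)
    (hβ0 : β 0 = βb) (hβ1 : β 1 = βb)
    (hβ'0 : deriv β 0 = -(αb * Real.sin βb) / (Real.sin lamb * Real.cos lamb))
    (hβ'1 : deriv β 1 = -(αb * Real.sin βb) / (Real.sin (lamb + αb) * Real.cos (lamb + αb)))
    (ω2 ω3 : ℝ → ℝ)
    (hω2 : ∀ s, ω2 s = deriv α s * Real.cos (β s) -
      deriv β s * Real.sin (α s) * Real.cos (α s) * Real.sin (β s))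
    (hω3 : ∀ s, ω3 s = deriv α s * Real.sin (β s) +
      deriv β s * Real.sin (α s) * Real.cos (α s) * Real.cos (β s)) :
    ∀ s ∈ Icc (0:ℝ) 1, 0 < ω2 s ^ 2 + ω3 s ^ 2 :=
  stmt_13_general αb βb lamb hαb hβb hlamb α β hαpoly hα0 hα1 hα'0 hα'1 hβ'0 hβ'1 ω2 ω3 hω2 hω3
end
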